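/- arXiv:1209.2408 — 2 statements merged into one kernel-verified Lean document; each statement's English description precedes it below -/
import Mathlib

section
/- Nonzeroness transfer for the staircase substitution: with the matrices X_i and map φ as above, for any noncommutative polynomial f ∈ F⟨x_0,…,x_{n-1}⟩ of degree ≤ D, f = 0 if and only if f(X_0,…,X_{n-1}) = 0 (as a matrix over the commutative polynomial ring F[x_{i,j}]). Moreover each entry (f(X⃗))_{0,ℓ} is a set-multilinear polynomial with respect to the partition of the variables into the sets {x_{i,j} : i} for each j. -/
/-!
Entry `(k, l)` of a product `X_{a₁} ⋯ X_{a_d}` of staircase matrices is the single monomial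
`x_{a₁,k+1} ⋯ x_{a_d,k+d}` when `l = k + d`, and `0` otherwise. The second index of each variable
records its position in the word, so distinct words give distinct monomials and the coefficient of
`φ(w)` in entry `(0, |w|)` of `f(X⃗)` is the coefficient of `w` in `f`; the bound `|w| ≤ D` is
what makes that entry exist. The same description shows that every monomial of entry `(0, ℓ)`
uses exactly one variable `x_{•,j}` for each `1 ≤ j ≤ ℓ` and none other.
-/

/-- The staircase matrix X_i: the (D+1)×(D+1) matrix over F[x_{i,j}] with
(X_i)_{k,k+1} = x_{i,k+1} and zeros elsewhere. Variables are indexed by pairs (i,j). -/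
noncomputable def staircaseMatrix (F : Type*) [Field F] (n D : ℕ) (i : Fin n) :
    Matrix (Fin (D + 1)) (Fin (D + 1)) (MvPolynomial (Fin n × ℕ) F) :=
  Matrix.of fun k l => if (l : ℕ) = (k : ℕ) + 1 then MvPolynomial.X (i, (l : ℕ)) else 0

/-- Evaluation of a noncommutative polynomial at the staircase matrices. -/
noncomputable def staircaseEval (F : Type*) [Field F] (n D : ℕ)
    (f : MonoidAlgebra F (FreeMonoid (Fin n))) :
    Matrix (Fin (D + 1)) (Fin (D + 1)) (MvPolynomial (Fin n × ℕ) F) :=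
  MonoidAlgebra.lift F
    (Matrix (Fin (D + 1)) (Fin (D + 1)) (MvPolynomial (Fin n × ℕ) F)) (FreeMonoid (Fin n))
    (FreeMonoid.lift (staircaseMatrix F n D)) f

section

variable {n : ℕ}

/-- The exponent of `x_{a₁,k+1} ⋯ x_{a_d,k+d}`; `staircaseExponent 0` is the paper's `φ`. -/
noncomputable def staircaseExponent : ℕ → List (Fin n) → (Fin n × ℕ) →₀ ℕ
  | _, [] => 0
  | k, a :: w => Finsupp.single (a, k + 1) 1 + staircaseExponent (k + 1) w

lemma staircaseExponent_nil (k : ℕ) : staircaseExponent k ([] : List (Fin n)) = 0 := rfl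

lemma staircaseExponent_cons (k : ℕ) (a : Fin n) (w : List (Fin n)) :
    staircaseExponent k (a :: w) = Finsupp.single (a, k + 1) 1 + staircaseExponent (k + 1) w :=
  rfl

lemma staircaseExponent_apply_of_le (k : ℕ) (w : List (Fin n)) (i : Fin n) {j : ℕ}
    (hj : j ≤ k) : staircaseExponent k w (i, j) = 0 := by
  induction w generalizing k with
  | nil => rfl
  | cons a w ih =>
    rw [staircaseExponent_cons, Finsupp.add_apply, ih (k + 1) (by omega),
      Finsupp.single_eq_of_ne (by simp; omega)]

lemma staircaseExponent_cons_apply_head (k : ℕ) (a : Fin n) (w : List (Fin n)) (i : Fin n) :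
    staircaseExponent k (a :: w) (i, k + 1) = if a = i then 1 else 0 := by
  rw [staircaseExponent_cons, Finsupp.add_apply, staircaseExponent_apply_of_le _ _ _ le_rfl,
    add_zero]
  simp [Finsupp.single_apply]

lemma staircaseExponent_injective (k : ℕ) :
    Function.Injective (staircaseExponent (n := n) k) := by
  intro w w' h
  induction w generalizing w' k with
  | nil =>
    cases w' with
    | nil => rfl
    | cons a w' =>
      simpa [staircaseExponent_nil, staircaseExponent_cons_apply_head] using congr($h (a, k + 1))
  | cons a w ih =>
    cases w' with
    | nil =>
      simpa [staircaseExponent_nil, staircaseExponent_cons_apply_head] using congr($h (a, k + 1))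
    | cons a' w' =>
      obtain rfl : a' = a := by
        simpa [staircaseExponent_cons_apply_head] using congr($h (a, k + 1)).symm
      rw [ih (k + 1) (add_left_cancel h)]

lemma sum_staircaseExponent_apply (k : ℕ) (w : List (Fin n)) (j : ℕ) :
    ∑ i, staircaseExponent k w (i, j) = if k < j ∧ j ≤ k + w.length then 1 else 0 := by
  induction w generalizing k with
  | nil => simp [staircaseExponent_nil]
  | cons a w ih =>
    simp only [staircaseExponent_cons, Finsupp.add_apply, Finset.sum_add_distrib, ih,
      Finsupp.single_apply, Prod.mk.injEq, ite_and, Finset.sum_ite_eq, Finset.mem_univ,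
      List.length_cons]
    split_ifs <;> omega

variable {F : Type*} [Field F] {D : ℕ}

lemma staircaseMatrix_mul_apply (a : Fin n)
    (M : Matrix (Fin (D + 1)) (Fin (D + 1)) (MvPolynomial (Fin n × ℕ) F)) (k l : Fin (D + 1)) :
    (staircaseMatrix F n D a * M) k l =
      if h : (k : ℕ) + 1 ≤ D then MvPolynomial.X (a, (k : ℕ) + 1) * M ⟨k + 1, by omega⟩ l
      else 0 := by
  simp only [Matrix.mul_apply, staircaseMatrix, Matrix.of_apply, ite_mul, zero_mul]
  split_ifs with h
  · rw [Finset.sum_eq_single ⟨k + 1, by omega⟩ (fun b _ hb => if_neg fun hb' => hb (Fin.ext hb'))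
      (by simp), if_pos rfl]
  · exact Finset.sum_eq_zero fun b _ => if_neg (by omega)

lemma list_prod_map_staircaseMatrix_apply (w : List (Fin n)) (k l : Fin (D + 1)) :
    (w.map (staircaseMatrix F n D)).prod k l =
      if (l : ℕ) = k + w.length then MvPolynomial.monomial (staircaseExponent k w) 1 else 0 := by
  induction w generalizing k with
  | nil => simp [Matrix.one_apply, Fin.ext_iff, eq_comm, staircaseExponent_nil]
  | cons a w ih =>
    rw [List.map_cons, List.prod_cons, staircaseMatrix_mul_apply, List.length_cons]
    by_cases hk : (k : ℕ) + 1 ≤ D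
    · rw [dif_pos hk, ih]
      dsimp only
      by_cases hl : (l : ℕ) = k + (w.length + 1)
      · rw [if_pos (by omega), if_pos hl, MvPolynomial.X, MvPolynomial.monomial_mul, one_mul,
          staircaseExponent_cons]
      · rw [if_neg (by omega), if_neg hl, mul_zero]
    · rw [dif_neg hk, if_neg (by omega)]

lemma staircaseEval_apply (f : MonoidAlgebra F (FreeMonoid (Fin n))) (k l : Fin (D + 1)) :
    staircaseEval F n D f k l = f.coeff.sum fun w c =>
      if (l : ℕ) = k + w.toList.length then
        MvPolynomial.monomial (staircaseExponent k w.toList) c else 0 := by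
  rw [staircaseEval, MonoidAlgebra.lift_apply, Finsupp.sum, Matrix.sum_apply, Finsupp.sum]
  refine Finset.sum_congr rfl fun w _ => ?_
  rw [Matrix.smul_apply, FreeMonoid.lift_apply, list_prod_map_staircaseMatrix_apply]
  split_ifs <;> simp [MvPolynomial.smul_monomial]

lemma coeff_staircaseEval_apply (f : MonoidAlgebra F (FreeMonoid (Fin n))) (k l : Fin (D + 1))
    (w : FreeMonoid (Fin n)) :
    (staircaseEval F n D f k l).coeff (staircaseExponent k w.toList) =
      if (l : ℕ) = k + w.toList.length then f.coeff w else 0 := by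
  rw [staircaseEval_apply, Finsupp.sum, MvPolynomial.coeff_sum,
    Finset.sum_eq_single w (fun v _ hv => ?_) (fun hw => ?_)]
  · split_ifs <;> simp
  · split_ifs
    · rw [MvPolynomial.coeff_monomial, if_neg fun h =>
        hv (FreeMonoid.toList.injective (staircaseExponent_injective k h))]
    · exact MvPolynomial.coeff_zero _
  · rw [Finsupp.notMem_support_iff.mp hw]
    split_ifs <;> simp

lemma exists_eq_staircaseExponent_of_mem_support {f : MonoidAlgebra F (FreeMonoid (Fin n))}
    {k l : Fin (D + 1)} {m : (Fin n × ℕ) →₀ ℕ} (hm : m ∈ (staircaseEval F n D f k l).support) :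
    ∃ w : FreeMonoid (Fin n), (l : ℕ) = k + w.toList.length ∧ m = staircaseExponent k w.toList := by
  by_contra! h
  refine MvPolynomial.mem_support_iff.mp hm ?_
  rw [staircaseEval_apply, Finsupp.sum, MvPolynomial.coeff_sum]
  refine Finset.sum_eq_zero fun w _ => ?_
  split_ifs with hl
  · rw [MvPolynomial.coeff_monomial, if_neg (h w hl).symm]
  · rfl

lemma sum_apply_of_mem_support_staircaseEval {f : MonoidAlgebra F (FreeMonoid (Fin n))}
    {k l : Fin (D + 1)} {m : (Fin n × ℕ) →₀ ℕ} (hm : m ∈ (staircaseEval F n D f k l).support)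
    (j : ℕ) : ∑ i, m (i, j) = if (k : ℕ) < j ∧ j ≤ l then 1 else 0 := by
  obtain ⟨w, hl, rfl⟩ := exists_eq_staircaseExponent_of_mem_support hm
  rw [sum_staircaseExponent_apply, hl]

lemma staircaseEval_eq_zero_iff {f : MonoidAlgebra F (FreeMonoid (Fin n))}
    (hdeg : ∀ w ∈ f.coeff.support, w.toList.length ≤ D) : staircaseEval F n D f = 0 ↔ f = 0 := by
  refine ⟨fun h => ?_, fun h => h ▸ map_zero _⟩
  rw [← MonoidAlgebra.coeff_eq_zero]
  ext w
  rw [Finsupp.coe_zero, Pi.zero_apply]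
  by_contra hw
  have hlen := Nat.lt_succ_of_le (hdeg w (Finsupp.mem_support_iff.mpr hw))
  have hcoeff := coeff_staircaseEval_apply f 0 ⟨_, hlen⟩ w
  simp only [h, Matrix.zero_apply, MvPolynomial.coeff_zero, Fin.val_zero, zero_add] at hcoeff
  exact hw hcoeff.symm

end

theorem staircase_nonzeroness_and_setMultilinear_general {F : Type*} [Field F] (n D : ℕ)
    (f : MonoidAlgebra F (FreeMonoid (Fin n)))
    (hdeg : ∀ w ∈ f.coeff.support, w.toList.length ≤ D) :
    (f = 0 ↔ staircaseEval F n D f = 0) ∧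
    ∀ ℓ : Fin (D + 1), ∀ m ∈ (staircaseEval F n D f 0 ℓ).support, ∀ j : ℕ,
      ((1 ≤ j ∧ j ≤ (ℓ : ℕ)) → (∑ i : Fin n, m (i, j)) = 1) ∧
      (¬(1 ≤ j ∧ j ≤ (ℓ : ℕ)) → (∑ i : Fin n, m (i, j)) = 0) := by
  refine ⟨(staircaseEval_eq_zero_iff hdeg).symm, fun ℓ m hm j => ?_⟩
  rw [sum_apply_of_mem_support_staircaseEval hm, Fin.val_zero]
  exact ⟨fun hj => if_pos hj, fun hj => if_neg hj⟩

/-- Nonzeroness transfer for the staircase substitution: for a noncommutative polynomial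
f of degree ≤ D, f = 0 iff f(X⃗) = 0; moreover each entry (f(X⃗))_{0,ℓ} is set-multilinear:
every monomial in its support uses exactly one variable x_{•,j} for each 1 ≤ j ≤ ℓ and no
variable x_{•,j} for other j. -/
theorem staircase_nonzeroness_and_setMultilinear {F : Type*} [Field F] (n D : ℕ)
    (hn : 1 ≤ n) (f : MonoidAlgebra F (FreeMonoid (Fin n)))
    (hdeg : ∀ w ∈ f.coeff.support, w.toList.length ≤ D) :
    (f = 0 ↔ staircaseEval F n D f = 0) ∧
    ∀ ℓ : Fin (D + 1), ∀ m ∈ (staircaseEval F n D f 0 ℓ).support, ∀ j : ℕ,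
      ((1 ≤ j ∧ j ≤ (ℓ : ℕ)) → (∑ i : Fin n, m (i, j)) = 1) ∧
      (¬(1 ≤ j ∧ j ≤ (ℓ : ℕ)) → (∑ i : Fin n, m (i, j)) = 0) :=
  staircase_nonzeroness_and_setMultilinear_general n D f hdeg
end

section
/- Two-variable span equality after rank extraction: let M ∈ F[x]^{r×r} and N ∈ F[y]^{r×r} have degree < n, and let ω ∈ F have multiplicative order ≥ n². Then for every α ∈ F, span{ M(ω^ℓ α) N((ω^ℓ α)^n) : ℓ ∈ {0,…,r²-1} } ⊆ span{ coeff_{x^i y^j}(M(x)N(y)) : i, j ∈ {0,…,n-1} }, and for all but fewer than n²r² values of α ∈ F the two spans are equal. -/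
/-!
Write `E_k` (`k = i + n j < n²`) for the coefficient matrices, so that `M(β) N(βⁿ) = ∑ₖ βᵏ E_k`
and every evaluated product lies in `W = span {E_k}`. Choosing pivots `s₁ < ⋯ < s_d` greedily
(`E_s` not in the span of the earlier `E_k`) gives a basis of `W` in which the `b`-th coordinate
of `E_k` vanishes for `k < s_b`. The coordinate matrix of the vectors `∑ₖ (ωˡ α)ᵏ E_k`, `ℓ < d`,
is then a polynomial matrix in `α` whose column `b` is divisible by `α ^ s_b`; after dividing,
its value at `α = 0` is a Vandermonde matrix in the distinct nodes `ω ^ s_b`. So its determinant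
is a nonzero polynomial of degree at most `d (n² - 1) < n² r²`, and away from its roots the
`d` vectors form a basis of `W`.
-/

open Polynomial Matrix Submodule Module

namespace Polynomial

variable {R ι : Type*} [CommRing R] [Fintype ι] {n : ℕ}

theorem natDegree_det_le_of_natDegree_le [DecidableEq ι] (M : Matrix ι ι R[X]) {e : ℕ}
    (h : ∀ i j, (M i j).natDegree ≤ e) : M.det.natDegree ≤ Fintype.card ι * e := by
  rw [det_apply]
  refine natDegree_sum_le_of_forall_le _ _ fun σ _ => ?_
  refine (natDegree_smul_le _ _).trans <| (natDegree_prod_le _ _).trans ?_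
  exact (Finset.sum_le_card_nsmul _ _ e fun i _ => h (σ i) i).trans (by simp)

theorem eval_eq_sum_fin {p : R[X]} (hp : p.degree < n) (β : R) :
    p.eval β = ∑ i : Fin n, p.coeff i * β ^ (i : ℕ) := by
  rw [eval_eq_sum, ← sum_fin _ (by simp) hp]

theorem eval_mul_eval_pow_eq_sum {p q : R[X]} (hp : p.degree < n) (hq : q.degree < n) (β : R) :
    p.eval β * q.eval (β ^ n) =
      ∑ ij : Fin n × Fin n, β ^ ((ij.1 : ℕ) + n * ij.2) * (p.coeff ij.1 * q.coeff ij.2) := by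
  rw [eval_eq_sum_fin hp, eval_eq_sum_fin hq, Finset.sum_mul_sum, ← Finset.univ_product_univ,
    Finset.sum_product]
  refine Finset.sum_congr rfl fun i _ => Finset.sum_congr rfl fun j _ => ?_
  ring

noncomputable def bivariateCoeff (M N : Matrix ι ι R[X]) (i j : ℕ) : Matrix ι ι R :=
  ((M.map (C : R[X] →+* R[X][X])) * (N.map (Polynomial.map (C : R →+* R[X])))).map
    fun q => (q.coeff j).coeff i

theorem bivariateCoeff_apply (M N : Matrix ι ι R[X]) (i j : ℕ) (u v : ι) :
    bivariateCoeff M N i j u v = ∑ w, (M u w).coeff i * (N w v).coeff j := by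
  simp only [bivariateCoeff, map_apply, mul_apply, finsetSum_coeff, coeff_C_mul, coeff_map,
    coeff_mul_C]

theorem map_eval_mul_map_eval_pow (M N : Matrix ι ι R[X])
    (hM : ∀ u v, (M u v).degree < n) (hN : ∀ u v, (N u v).degree < n) (β : R) :
    (M.map fun q => q.eval β) * (N.map fun q => q.eval (β ^ n)) =
      ∑ ij : Fin n × Fin n, β ^ ((ij.1 : ℕ) + n * ij.2) • bivariateCoeff M N ij.1 ij.2 := by
  ext u v
  simp only [mul_apply, map_apply, eval_mul_eval_pow_eq_sum (hM _ _) (hN _ _), Matrix.sum_apply,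
    Matrix.smul_apply, bivariateCoeff_apply, smul_eq_mul, Finset.mul_sum]
  exact Finset.sum_comm

end Polynomial

section

variable {F V ι : Type*} [Field F] [AddCommGroup V] [Module F V] {m d : ℕ}

theorem exists_linearIndependent_pivots :
    ∀ {m : ℕ} (E : Fin m → V), ∃ (d : ℕ) (s : Fin d → Fin m),
      LinearIndependent F (E ∘ s) ∧ ∀ k, E k ∈ span F ((E ∘ s) '' {b | s b ≤ k})
  | 0, _ => ⟨0, Fin.elim0, linearIndependent_empty_type, fun k => k.elim0⟩
  | m + 1, E => by
    obtain ⟨d, s, hli, hspan⟩ := exists_linearIndependent_pivots (E ∘ Fin.castSucc)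
    have hinit : ∀ {d'} (s' : Fin d' → Fin (m + 1)), (∀ b, ∃ b', s' b' = (s b).castSucc) →
        ∀ k : Fin m, E k.castSucc ∈ span F ((E ∘ s') '' {b | s' b ≤ k.castSucc}) := by
      intro d' s' hs' k
      refine span_mono ?_ (hspan k)
      rintro _ ⟨b, hb, rfl⟩
      obtain ⟨b', hb'⟩ := hs' b
      exact ⟨b', by simpa [hb'] using hb, by simp [hb']⟩
    by_cases hlast : E (Fin.last m) ∈ span F (Set.range (E ∘ Fin.castSucc ∘ s))
    · refine ⟨d, Fin.castSucc ∘ s, hli, fun k => k.lastCases ?_ (hinit _ fun b => ⟨b, rfl⟩)⟩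
      simpa [Fin.le_last, Function.comp_def] using hlast
    · refine ⟨d + 1, Fin.snoc (Fin.castSucc ∘ s) (Fin.last m), ?_, fun k => k.lastCases ?_ ?_⟩
      · rw [Fin.comp_snoc, linearIndependent_finSnoc]
        exact ⟨hli, hlast⟩
      · exact subset_span ⟨Fin.last d, by simp, by simp⟩
      · exact hinit _ fun b => ⟨b.castSucc, by simp⟩

theorem Module.Basis.span_repr_eq_zero_of_mem_span_image {v : ι → V} (hli : LinearIndependent F v)
    {S : Set ι} {x : V} (hx : x ∈ span F (v '' S)) (hxv : x ∈ span F (Set.range v)) {b : ι}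
    (hb : b ∉ S) : (Basis.span hli).repr ⟨x, hxv⟩ b = 0 := by
  have himage : v '' S = (span F (Set.range v)).subtype '' (Basis.span hli '' S) := by
    rw [Set.image_image]
    simp
  rw [himage, span_image] at hx
  obtain ⟨y, hy, hyx⟩ := mem_map.mp hx
  obtain rfl : y = ⟨x, hxv⟩ := Subtype.ext hyx
  exact Finsupp.notMem_support_iff.mp fun hbs => hb ((Basis.mem_span_image _).mp hy hbs)

theorem exists_basis_pivots (E : Fin m → V) :
    ∃ (d : ℕ) (s : Fin d → Fin m) (bas : Basis (Fin d) F (span F (Set.range E))),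
      Function.Injective s ∧
      (∀ k b, k < s b → bas.repr ⟨E k, subset_span ⟨k, rfl⟩⟩ b = 0) ∧
      ∀ b, bas.repr ⟨E (s b), subset_span ⟨s b, rfl⟩⟩ b = 1 := by
  obtain ⟨d, s, hli, hpiv⟩ := exists_linearIndependent_pivots (F := F) E
  have hEW : ∀ k, E k ∈ span F (Set.range (E ∘ s)) :=
    fun k => span_mono (Set.image_subset_range _ _) (hpiv k)
  have hW : span F (Set.range (E ∘ s)) = span F (Set.range E) :=
    le_antisymm (span_mono (Set.range_comp_subset_range _ _))
      (span_le.mpr (Set.range_subset_iff.mpr hEW))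
  refine ⟨d, s, (Basis.span hli).map (LinearEquiv.ofEq _ _ hW), hli.injective.of_comp,
    fun k b hk => ?_, fun b => ?_⟩
  · exact Basis.span_repr_eq_zero_of_mem_span_image hli (hpiv k) (hEW k) (not_le.mpr hk)
  · exact (Finsupp.ext_iff.mp (Basis.span_repr_eq_single hli b (hEW (s b))) b).trans
      (Finsupp.single_eq_same)

theorem span_range_sum_smul_le (c : ι → Fin m → F) (E : Fin m → V) :
    span F (Set.range fun ℓ => ∑ k, c ℓ k • E k) ≤ span F (Set.range E) :=
  span_le.mpr <| Set.range_subset_iff.mpr fun _ =>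
    sum_mem fun k _ => smul_mem _ _ (subset_span ⟨k, rfl⟩)

theorem span_range_sum_smul_eq_of_det_ne_zero {W : Submodule F V}
    (bas : Basis (Fin d) F W) (E : Fin m → W) (c : Fin d → Fin m → F)
    (h : det (of fun ℓ b => ∑ k, c ℓ k * bas.repr (E k) b) ≠ 0) :
    span F (Set.range fun ℓ => ∑ k, c ℓ k • (E k : V)) = W := by
  set w : Fin d → W := fun ℓ => ∑ k, c ℓ k • E k
  have hmat : bas.toMatrix w = (of fun ℓ b => ∑ k, c ℓ k * bas.repr (E k) b)ᵀ := by
    ext b ℓ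
    simp [Basis.toMatrix_apply, w]
  have hdet : bas.det w ≠ 0 := by
    rwa [Basis.det_apply, hmat, det_transpose]
  have hspan : span F (Set.range w) = ⊤ := (bas.is_basis_iff_det.mpr hdet.isUnit).2
  have hcoe : W.subtype ∘ w = fun ℓ => ∑ k, c ℓ k • (E k : V) := by
    ext ℓ
    simp [w]
  rw [← hcoe, Set.range_comp, ← map_span, hspan, map_subtype_top]

noncomputable def scaledEvalMatrix (ω : F) (A : Fin m → Fin d → F) : Matrix (Fin d) (Fin d) F[X] :=
  of fun ℓ b => ∑ k, C (A k b * ω ^ ((ℓ : ℕ) * k)) * X ^ (k : ℕ)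

theorem eval_det_scaledEvalMatrix (ω α : F) (A : Fin m → Fin d → F) :
    (scaledEvalMatrix ω A).det.eval α =
      det (of fun (ℓ b : Fin d) => ∑ k : Fin m, (ω ^ (ℓ : ℕ) * α) ^ (k : ℕ) * A k b) := by
  rw [← coe_evalRingHom, RingHom.map_det]
  refine congrArg det (Matrix.ext fun ℓ b => ?_)
  simp only [scaledEvalMatrix, RingHom.mapMatrix_apply, map_apply, of_apply, coe_evalRingHom,
    eval_finsetSum, eval_mul, eval_C, eval_pow, eval_X, mul_pow, pow_mul]
  exact Finset.sum_congr rfl fun k _ => by ring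

theorem natDegree_det_scaledEvalMatrix_le (ω : F) (A : Fin m → Fin d → F) :
    (scaledEvalMatrix ω A).det.natDegree ≤ d * (m - 1) := by
  refine (natDegree_det_le_of_natDegree_le (e := m - 1) _ fun ℓ b => ?_).trans_eq (by simp)
  simp only [scaledEvalMatrix, of_apply]
  refine natDegree_sum_le_of_forall_le _ _ fun k _ => (natDegree_C_mul_X_pow_le _ _).trans ?_
  have := k.isLt
  omega

theorem det_scaledEvalMatrix_ne_zero {ω : F} (hω : Function.Injective fun k : Fin m => ω ^ (k : ℕ))
    {A : Fin m → Fin d → F} {s : Fin d → Fin m} (hs : Function.Injective s)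
    (hA : ∀ k b, k < s b → A k b = 0) (hAs : ∀ b, A (s b) b ≠ 0) :
    (scaledEvalMatrix ω A).det ≠ 0 := by
  set R : Matrix (Fin d) (Fin d) F[X] :=
    of fun ℓ b => ∑ k, C (A k b * ω ^ ((ℓ : ℕ) * k)) * X ^ ((k : ℕ) - s b)
  have hfactor : scaledEvalMatrix ω A = of fun ℓ b => X ^ (s b : ℕ) * R ℓ b := by
    ext1 ℓ b
    simp only [scaledEvalMatrix, R, of_apply, Finset.mul_sum]
    refine Finset.sum_congr rfl fun k _ => ?_
    rcases lt_or_ge k (s b) with hk | hk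
    · simp [hA k b hk]
    · rw [mul_left_comm, ← pow_add, Nat.add_sub_cancel' (Fin.le_iff_val_le_val.mp hk)]
  have hR0 : R.map (eval 0) =
      of fun ℓ b => A (s b) b * (vandermonde fun b => ω ^ (s b : ℕ))ᵀ ℓ b := by
    ext ℓ b
    simp only [R, map_apply, of_apply, transpose_apply, vandermonde_apply, eval_finsetSum,
      eval_mul, eval_C, eval_pow, eval_X]
    rw [Finset.sum_eq_single (s b)]
    · simp [← pow_mul, mul_comm]
    · intro k _ hk
      rcases lt_or_gt_of_ne hk with hk | hk
      · simp [hA k b hk]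
      · simp [zero_pow (Nat.sub_ne_zero_of_lt hk)]
    · simp
  have hRdet : R.det ≠ 0 := by
    intro h
    have := congrArg (eval 0) h
    rw [← coe_evalRingHom, RingHom.map_det, RingHom.mapMatrix_apply, coe_evalRingHom, hR0,
      det_mul_row, det_transpose, eval_zero] at this
    refine mul_ne_zero (Finset.prod_ne_zero_iff.mpr fun b _ => hAs b) ?_ this
    exact det_vandermonde_ne_zero_iff.mpr (hω.comp hs)
  rw [hfactor, det_mul_row]
  exact mul_ne_zero (Finset.prod_ne_zero_iff.mpr fun b _ => pow_ne_zero _ X_ne_zero) hRdet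

theorem exists_card_le_forall_notMem_span_range_sum_pow_smul_eq
    {ω : F} (hω : Function.Injective fun k : Fin m => ω ^ (k : ℕ)) (E : Fin m → V) {L : ℕ}
    (hL : finrank F (span F (Set.range E)) ≤ L) :
    ∃ B : Finset F, B.card ≤ finrank F (span F (Set.range E)) * (m - 1) ∧ ∀ α ∉ B,
      span F (Set.range fun ℓ : Fin L => ∑ k : Fin m, (ω ^ (ℓ : ℕ) * α) ^ (k : ℕ) • E k) =
        span F (Set.range E) := by
  classical
  obtain ⟨d, s, bas, hs, hA, hAs⟩ := exists_basis_pivots (F := F) E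
  set A : Fin m → Fin d → F := fun k b => bas.repr ⟨E k, subset_span ⟨k, rfl⟩⟩ b
  set G := (scaledEvalMatrix ω A).det
  have hG : G ≠ 0 := det_scaledEvalMatrix_ne_zero hω hs hA fun b => by simp [A, hAs]
  have hd : finrank F (span F (Set.range E)) = d := by simp [finrank_eq_card_basis bas]
  refine ⟨G.roots.toFinset, ?_, fun α hα => ?_⟩
  · exact (Multiset.toFinset_card_le _).trans <| (card_roots' G).trans <|
      hd ▸ natDegree_det_scaledEvalMatrix_le ω A
  have hGα : G.eval α ≠ 0 := fun h => hα (Multiset.mem_toFinset.mpr ((mem_roots hG).mpr h))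
  rw [eval_det_scaledEvalMatrix] at hGα
  have hfirst := span_range_sum_smul_eq_of_det_ne_zero bas (fun k => ⟨E k, subset_span ⟨k, rfl⟩⟩)
    (fun ℓ k => (ω ^ (ℓ : ℕ) * α) ^ (k : ℕ)) hGα
  refine le_antisymm (span_range_sum_smul_le _ E) (hfirst ▸ span_mono ?_)
  rintro _ ⟨ℓ, rfl⟩
  exact ⟨Fin.castLE (hd ▸ hL) ℓ, rfl⟩

end

/-- Two-variable span equality after rank extraction: for M ∈ F[x]^{r×r}, N ∈ F[y]^{r×r}
of degree < n and ω of multiplicative order ≥ n², for every α the span of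
{M(ω^ℓα)N((ω^ℓα)^n) : ℓ < r²} is contained in the span of the coefficient matrices
{coeff_{x^i y^j}(M(x)N(y)) : i,j < n}, and for all but fewer than n²r² values of α the two
spans are equal.  Here M(x)N(y) is viewed as a matrix over F[x][y] (x the inner variable,
y the outer one). -/
theorem two_var_span_eq_after_extraction {F : Type*} [Field F]
    (r n : ℕ) (hr : 1 ≤ r) (hn : 1 ≤ n)
    (M N : Matrix (Fin r) (Fin r) (Polynomial F))
    (hM : ∀ u v, (M u v).degree < (n : ℕ)) (hN : ∀ u v, (N u v).degree < (n : ℕ))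
    (ω : F) (hω : Set.InjOn (fun k : ℕ => ω ^ k) (Set.Iio (n ^ 2))) :
    (∀ α : F,
      Submodule.span F (Set.range fun ℓ : Fin (r ^ 2) =>
          (M.map fun q => q.eval (ω ^ (ℓ : ℕ) * α)) *
          (N.map fun q => q.eval ((ω ^ (ℓ : ℕ) * α) ^ n))) ≤
      Submodule.span F (Set.range fun ij : Fin n × Fin n =>
          ((M.map (Polynomial.C : Polynomial F →+* Polynomial (Polynomial F))) *
            (N.map (Polynomial.map (Polynomial.C : F →+* Polynomial F)))).map
            fun q => (q.coeff (ij.2 : ℕ)).coeff (ij.1 : ℕ))) ∧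
    ∃ B : Finset F, B.card < n ^ 2 * r ^ 2 ∧ ∀ α ∉ B,
      Submodule.span F (Set.range fun ℓ : Fin (r ^ 2) =>
          (M.map fun q => q.eval (ω ^ (ℓ : ℕ) * α)) *
          (N.map fun q => q.eval ((ω ^ (ℓ : ℕ) * α) ^ n))) =
      Submodule.span F (Set.range fun ij : Fin n × Fin n =>
          ((M.map (Polynomial.C : Polynomial F →+* Polynomial (Polynomial F))) *
            (N.map (Polynomial.map (Polynomial.C : F →+* Polynomial F)))).map
            fun q => (q.coeff (ij.2 : ℕ)).coeff (ij.1 : ℕ)) := by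
  set D : Fin n × Fin n → Matrix (Fin r) (Fin r) F := fun ij => bivariateCoeff M N ij.1 ij.2
  let e : Fin n × Fin n ≃ Fin (n * n) := (Equiv.prodComm _ _).trans finProdFinEquiv
  have hexp : ∀ β : F, (M.map fun q => q.eval β) * (N.map fun q => q.eval (β ^ n)) =
      ∑ k : Fin (n * n), β ^ (k : ℕ) • (D ∘ e.symm) k := fun β => by
    rw [map_eval_mul_map_eval_pow M N hM hN, ← e.sum_comp]
    simp [e, D]
  have hrange : Set.range (D ∘ e.symm) = Set.range D := e.symm.surjective.range_comp D
  have hω' : Function.Injective fun k : Fin (n * n) => ω ^ (k : ℕ) := fun k k' h =>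
    Fin.ext (hω (by simp [sq]) (by simp [sq]) h)
  have hrank : finrank F (span F (Set.range (D ∘ e.symm))) ≤ r ^ 2 :=
    (Submodule.finrank_le _).trans (by simp [Module.finrank_matrix, sq])
  obtain ⟨B, hB, hBspan⟩ :=
    exists_card_le_forall_notMem_span_range_sum_pow_smul_eq hω' (D ∘ e.symm) hrank
  change (∀ α : F, _ ≤ span F (Set.range D)) ∧
    ∃ B : Finset F, _ ∧ ∀ α ∉ B, _ = span F (Set.range D)
  simp only [hexp, ← hrange]
  refine ⟨fun α => span_range_sum_smul_le _ _, B, hB.trans_lt ?_, hBspan⟩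
  calc _ ≤ r ^ 2 * (n * n - 1) := Nat.mul_le_mul_right _ hrank
    _ < r ^ 2 * (n * n) := Nat.mul_lt_mul_of_pos_left (by have := Nat.mul_pos hn hn; omega)
        (pow_pos hr 2)
    _ = n ^ 2 * r ^ 2 := by ring
end
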